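/- arXiv:2407.05763 — 2 statements merged into one kernel-verified Lean document; each statement's English description precedes it below -/
import Mathlib

section
/- Let G ∈ ℝ^{n×n}, P ∈ ℝ^{n×n} symmetric positive definite, and 0 < β ≤ α real numbers such that β·yᵀPy ≤ yᵀ(PG + GᵀP)y ≤ α·yᵀPy for all y ∈ ℝ^n. For x ≠ 0 let ‖x‖_d = e^{s_x} where s_x is the unique real with ‖exp(−s_x G)x‖_P = 1, and set ‖0‖_d = 0. Then for every x ∈ ℝ^n, min{‖x‖_d^{α/2}, ‖x‖_d^{β/2}} ≤ ‖x‖_P ≤ max{‖x‖_d^{α/2}, ‖x‖_d^{β/2}}. -/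
/-!
Along the orbit `v t = exp (t • G) *ᵥ x` the quadratic form `F t = ‖v t‖_P²` has
derivative `vᵀ(PG + GᵀP)v`, so the hypothesis reads `β F ≤ F' ≤ α F`. Grönwall's inequality
in both time directions puts `F 0 / F (-s)` between `exp (α s)` and `exp (β s)`. For
`s = log ‖x‖_d` we have `F (-s) = 1` and `F 0 = ‖x‖_P²`, and taking square roots gives
the sandwich.
-/

open Matrix

/-- The weighted Euclidean norm ‖x‖_P = √(xᵀPx). -/
noncomputable def wnorm {ι : Type*} [Fintype ι] (P : Matrix ι ι ℝ) (x : ι → ℝ) : ℝ :=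
  Real.sqrt (x ⬝ᵥ P.mulVec x)

open Real

section Gronwall

variable {f f' : ℝ → ℝ} {c : ℝ}

theorem antitone_exp_neg_mul_of_hasDerivAt_le (hf : ∀ t, HasDerivAt f (f' t) t)
    (h : ∀ t, f' t ≤ c * f t) : Antitone fun t => exp (-(c * t)) * f t := by
  have hg : ∀ t, HasDerivAt (fun t => exp (-(c * t)) * f t)
      (exp (-(c * t)) * (f' t - c * f t)) t := fun t =>
    (((hasDerivAt_id' t).const_mul c).fun_neg.exp.fun_mul (hf t)).congr_deriv (by ring)
  refine antitone_of_deriv_nonpos (fun t => (hg t).differentiableAt) fun t => ?_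
  rw [(hg t).deriv]
  exact mul_nonpos_of_nonneg_of_nonpos (exp_pos _).le (sub_nonpos.2 (h t))

theorem monotone_exp_neg_mul_of_le_hasDerivAt (hf : ∀ t, HasDerivAt f (f' t) t)
    (h : ∀ t, c * f t ≤ f' t) : Monotone fun t => exp (-(c * t)) * f t := by
  have hneg := antitone_exp_neg_mul_of_hasDerivAt_le (f := -f) (f' := -f') (c := c)
    (fun t => (hf t).neg) fun t => by simpa using h t
  intro a b hab
  simpa using hneg hab

end Gronwall

theorem exp_mul_sub_mul_le_iff {c a b x y : ℝ} :
    exp (c * (b - a)) * x ≤ y ↔ exp (-(c * a)) * x ≤ exp (-(c * b)) * y := by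
  rw [← mul_le_mul_iff_of_pos_left (exp_pos (-(c * b))), ← mul_assoc, ← exp_add]
  ring_nf

theorem le_exp_mul_sub_mul_iff {c a b x y : ℝ} :
    y ≤ exp (c * (b - a)) * x ↔ exp (-(c * b)) * y ≤ exp (-(c * a)) * x := by
  rw [← mul_le_mul_iff_of_pos_left (exp_pos (-(c * b))), ← mul_assoc (exp _) (exp _),
    ← exp_add]
  ring_nf

/-- Backwards in time (`b < a`) the roles of `α` and `β` swap, hence `min` and `max`. -/
theorem min_exp_mul_le_and_le_max_exp_mul {f f' : ℝ → ℝ} {α β : ℝ}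
    (hf : ∀ t, HasDerivAt f (f' t) t) (hβ : ∀ t, β * f t ≤ f' t) (hα : ∀ t, f' t ≤ α * f t)
    {a : ℝ} (ha : 0 ≤ f a) (b : ℝ) :
    min (exp (α * (b - a))) (exp (β * (b - a))) * f a ≤ f b ∧
      f b ≤ max (exp (α * (b - a))) (exp (β * (b - a))) * f a := by
  have hanti := antitone_exp_neg_mul_of_hasDerivAt_le hf hα
  have hmono := monotone_exp_neg_mul_of_le_hasDerivAt hf hβ
  rcases le_total a b with hab | hba
  · exact ⟨(mul_le_mul_of_nonneg_right (min_le_right _ _) ha).trans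
        (exp_mul_sub_mul_le_iff.2 (hmono hab)),
      (le_exp_mul_sub_mul_iff.2 (hanti hab)).trans
        (mul_le_mul_of_nonneg_right (le_max_left _ _) ha)⟩
  · exact ⟨(mul_le_mul_of_nonneg_right (min_le_left _ _) ha).trans
        (exp_mul_sub_mul_le_iff.2 (hanti hba)),
      (le_exp_mul_sub_mul_iff.2 (hmono hba)).trans
        (mul_le_mul_of_nonneg_right (le_max_right _ _) ha)⟩

section Matrix

variable {𝕜 ι : Type*} [NontriviallyNormedField 𝕜] [Fintype ι] {u v : 𝕜 → ι → 𝕜}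
  {u' v' : ι → 𝕜} {t : 𝕜}

theorem HasDerivAt.dotProduct (hu : HasDerivAt u u' t) (hv : HasDerivAt v v' t) :
    HasDerivAt (fun t => u t ⬝ᵥ v t) (u' ⬝ᵥ v t + u t ⬝ᵥ v') t :=
  (HasDerivAt.fun_sum (u := Finset.univ) fun i _ =>
    (hasDerivAt_pi.1 hu i).fun_mul (hasDerivAt_pi.1 hv i)).congr_deriv
      (Finset.sum_add_distrib ..)

theorem HasDerivAt.mulVec (A : Matrix ι ι 𝕜) (hv : HasDerivAt v v' t) :
    HasDerivAt (fun t => A *ᵥ v t) (A *ᵥ v') t :=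
  hasDerivAt_pi.2 fun i => (hasDerivAt_const t (A i)).dotProduct hv |>.congr_deriv
    (by rw [zero_dotProduct, zero_add]; rfl)

end Matrix

section MatrixExp

variable {𝕂 ι : Type*} [RCLike 𝕂] [Fintype ι] [DecidableEq ι]

attribute [local instance] Matrix.linftyOpNormedRing Matrix.linftyOpNormedAlgebra

theorem hasDerivAt_exp_smul_mulVec (G : Matrix ι ι 𝕂) (x : ι → 𝕂) (t : 𝕂) :
    HasDerivAt (fun t => NormedSpace.exp (t • G) *ᵥ x)
      (G *ᵥ (NormedSpace.exp (t • G) *ᵥ x)) t := by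
  let L : Matrix ι ι 𝕂 →L[𝕂] ι → 𝕂 := LinearMap.toContinuousLinearMap
    { toFun := (· *ᵥ x), map_add' := (add_mulVec · · x), map_smul' := (smul_mulVec · · x) }
  exact (L.hasFDerivAt.comp_hasDerivAt t (hasDerivAt_exp_smul_const' G t)).congr_deriv
    (mulVec_mulVec x G _).symm

end MatrixExp

theorem hasDerivAt_dotProduct_mulVec_exp_smul_mulVec {𝕂 ι : Type*} [RCLike 𝕂] [Fintype ι]
    [DecidableEq ι] (G P : Matrix ι ι 𝕂) (x : ι → 𝕂) (t : 𝕂) :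
    HasDerivAt
      (fun t => (NormedSpace.exp (t • G) *ᵥ x) ⬝ᵥ P *ᵥ (NormedSpace.exp (t • G) *ᵥ x))
      ((NormedSpace.exp (t • G) *ᵥ x) ⬝ᵥ (P * G + Gᵀ * P) *ᵥ
        (NormedSpace.exp (t • G) *ᵥ x)) t := by
  have hv := hasDerivAt_exp_smul_mulVec G x t
  refine (hv.dotProduct (hv.mulVec P)).congr_deriv ?_
  rw [add_mulVec, dotProduct_add, ← mulVec_mulVec, ← mulVec_mulVec, dotProduct_mulVec _ Gᵀ,
    vecMul_transpose, add_comm]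

theorem canonical_norm_sandwich_general
    (n : ℕ) (G P : Matrix (Fin n) (Fin n) ℝ)
    (α β : ℝ) (hβ : 0 < β)
    (hsand : ∀ y : Fin n → ℝ,
      β * (y ⬝ᵥ P.mulVec y) ≤ y ⬝ᵥ (P * G + Gᵀ * P).mulVec y ∧
      y ⬝ᵥ (P * G + Gᵀ * P).mulVec y ≤ α * (y ⬝ᵥ P.mulVec y))
    (dnorm : (Fin n → ℝ) → ℝ)
    (hd0 : dnorm 0 = 0)
    (hdpos : ∀ x : Fin n → ℝ, x ≠ 0 → 0 < dnorm x)
    (hdspec : ∀ x : Fin n → ℝ, x ≠ 0 →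
      wnorm P ((NormedSpace.exp ((-Real.log (dnorm x)) • G)).mulVec x) = 1) :
    ∀ x : Fin n → ℝ,
      min (dnorm x ^ (α / 2)) (dnorm x ^ (β / 2)) ≤ wnorm P x ∧
      wnorm P x ≤ max (dnorm x ^ (α / 2)) (dnorm x ^ (β / 2)) := by
  intro x
  rcases eq_or_ne x 0 with rfl | hx
  · have hβ0 : dnorm 0 ^ (β / 2) = 0 := by rw [hd0, zero_rpow (by positivity)]
    have hw0 : wnorm P 0 = 0 := by simp [wnorm]
    rw [hβ0, hw0]
    exact ⟨min_le_right _ _, le_max_right _ _⟩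
  set s := Real.log (dnorm x)
  have hunit :
      (NormedSpace.exp ((-s) • G) *ᵥ x) ⬝ᵥ P *ᵥ (NormedSpace.exp ((-s) • G) *ᵥ x) = 1 :=
    sqrt_eq_one.1 (hdspec x hx)
  have hbounds := min_exp_mul_le_and_le_max_exp_mul
    (hasDerivAt_dotProduct_mulVec_exp_smul_mulVec G P x) (fun _ => (hsand _).1)
    (fun _ => (hsand _).2) (hunit ▸ zero_le_one) 0
  simp only [hunit, mul_one, zero_sub, neg_neg, zero_smul, NormedSpace.exp_zero, one_mulVec]
    at hbounds
  have hpow (r : ℝ) : dnorm x ^ (r / 2) = √(exp (r * s)) := by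
    rw [rpow_def_of_pos (hdpos x hx), ← exp_half, mul_comm r, mul_div_assoc]
  rw [wnorm, hpow, hpow, ← sqrt_monotone.map_min, ← sqrt_monotone.map_max]
  exact ⟨sqrt_le_sqrt hbounds.1, sqrt_le_sqrt hbounds.2⟩

theorem canonical_norm_sandwich
    (n : ℕ) (G P : Matrix (Fin n) (Fin n) ℝ)
    (hP : P.PosDef)
    (α β : ℝ) (hβ : 0 < β) (hβα : β ≤ α)
    (hsand : ∀ y : Fin n → ℝ,
      β * (y ⬝ᵥ P.mulVec y) ≤ y ⬝ᵥ (P * G + Gᵀ * P).mulVec y ∧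
      y ⬝ᵥ (P * G + Gᵀ * P).mulVec y ≤ α * (y ⬝ᵥ P.mulVec y))
    (dnorm : (Fin n → ℝ) → ℝ)
    (hd0 : dnorm 0 = 0)
    (hdpos : ∀ x : Fin n → ℝ, x ≠ 0 → 0 < dnorm x)
    (hdspec : ∀ x : Fin n → ℝ, x ≠ 0 →
      wnorm P ((NormedSpace.exp ((-Real.log (dnorm x)) • G)).mulVec x) = 1) :
    ∀ x : Fin n → ℝ,
      min (dnorm x ^ (α / 2)) (dnorm x ^ (β / 2)) ≤ wnorm P x ∧
      wnorm P x ≤ max (dnorm x ^ (α / 2)) (dnorm x ^ (β / 2)) :=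
  canonical_norm_sandwich_general n G P α β hβ hsand dnorm hd0 hdpos hdspec
end

section
/- Let M ∈ ℝ^{n×n}, H ∈ ℝ^{n×p}, and R > 0. Then sup over w ∈ ℝ^p with 0 < |w| ≤ R of |(exp(μ·ln|w|·M) − I_n)·H·w| tends to 0 as μ → 0. Equivalently: for every ε > 0 there exists δ > 0 such that for all μ ∈ ℝ with |μ| < δ and all w ∈ ℝ^p with 0 < |w| ≤ R, |exp(μ·ln|w|·M)·H·w − H·w| < ε. -/
/-
With `A = μ log|w| • M`, the error is `(exp A - 1) H w`, and `‖exp A - 1‖ ≤ ‖A‖ exp ‖A‖`, so it is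
at most `|μ| ‖M‖ ‖H‖ · |log x| exp(|μ| ‖M‖ |log x|) x` with `x = |w|`. Once `|μ| ‖M‖ ≤ 1/2`, the
last factor is bounded on `0 < x ≤ R` (near `0` it is at most `√x |log x| ≤ 2`), so the error is
`O(|μ|)` uniformly in `w`.
-/

open Matrix

/-- The Euclidean norm of a finitely-indexed real vector. -/
noncomputable def euclNorm {ι : Type*} [Fintype ι] (x : ι → ℝ) : ℝ :=
  Real.sqrt (x ⬝ᵥ x)

open Real Filter Topology

lemma euclNorm_eq_norm_toLp {ι : Type*} [Fintype ι] (x : ι → ℝ) :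
    euclNorm x = ‖WithLp.toLp 2 x‖ := by
  simp [euclNorm, EuclideanSpace.norm_eq, dotProduct, sq]

lemma euclNorm_nonneg {ι : Type*} [Fintype ι] (x : ι → ℝ) : 0 ≤ euclNorm x :=
  sqrt_nonneg _

lemma NormedSpace.norm_exp_sub_one_le_exp_norm_sub_one {𝔸 : Type*} [NormedRing 𝔸]
    [NormedAlgebra ℝ 𝔸] [CompleteSpace 𝔸] (A : 𝔸) :
    ‖NormedSpace.exp A - 1‖ ≤ Real.exp ‖A‖ - 1 := by
  have hA := NormedSpace.expSeries_summable' (𝕂 := ℝ) A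
  have hA_tail := (NormedSpace.norm_expSeries_summable' (𝕂 := ℝ) A).comp_injective
    Nat.succ_injective
  have hnormA := NormedSpace.expSeries_summable' (𝕂 := ℝ) ‖A‖
  simp only [Real.exp_eq_exp_ℝ, NormedSpace.exp_eq_tsum ℝ]
  rw [hA.tsum_eq_zero_add, hnormA.tsum_eq_zero_add]
  simp only [pow_zero, Nat.factorial_zero, Nat.cast_one, inv_one, one_smul, add_sub_cancel_left]
  refine (norm_tsum_le_tsum_norm hA_tail).trans
    (hA_tail.tsum_le_tsum (fun k ↦ ?_) (hnormA.comp_injective Nat.succ_injective))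
  rw [norm_smul, Real.norm_of_nonneg (by positivity), smul_eq_mul]
  gcongr
  exact norm_pow_le' A k.succ_pos

lemma Real.exp_sub_one_le_mul_exp (t : ℝ) : Real.exp t - 1 ≤ t * Real.exp t := by
  have := mul_le_mul_of_nonneg_right (one_sub_le_exp_neg t) (exp_pos t).le
  rw [← exp_add, neg_add_cancel, exp_zero] at this
  linarith

lemma NormedSpace.norm_exp_sub_one_le {𝔸 : Type*} [NormedRing 𝔸] [NormedAlgebra ℝ 𝔸]
    [CompleteSpace 𝔸] (A : 𝔸) : ‖NormedSpace.exp A - 1‖ ≤ ‖A‖ * Real.exp ‖A‖ :=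
  (norm_exp_sub_one_le_exp_norm_sub_one A).trans (Real.exp_sub_one_le_mul_exp _)

lemma abs_log_mul_exp_mul_le_two {s x : ℝ} (hs : s ≤ 1 / 2) (hx₀ : 0 < x) (hx₁ : x ≤ 1) :
    |log x| * exp (s * |log x|) * x ≤ 2 := by
  have hlog : log x ≤ 0 := log_nonpos hx₀.le hx₁
  have hsqrt : exp (s * |log x|) * x ≤ x ^ (1 / 2 : ℝ) := by
    rw [rpow_def_of_pos hx₀, abs_of_nonpos hlog]
    calc exp (s * -log x) * x = exp (s * -log x + log x) := by rw [exp_add, exp_log hx₀]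
      _ ≤ exp (log x * (1 / 2)) := exp_le_exp.2 (by nlinarith)
  calc |log x| * exp (s * |log x|) * x ≤ |log x| * x ^ (1 / 2 : ℝ) := by
        rw [mul_assoc]; gcongr
    _ = |log x * x ^ (1 / 2 : ℝ)| := by rw [abs_mul, abs_of_pos (rpow_pos_of_pos hx₀ _)]
    _ ≤ 2 := by simpa using (abs_log_mul_self_rpow_lt x (1 / 2) hx₀ hx₁ (by norm_num)).le

lemma abs_log_mul_exp_mul_le_of_one_le {s x R : ℝ} (hs : s ≤ 1) (hx : 1 ≤ x) (hxR : x ≤ R) :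
    |log x| * exp (s * |log x|) * x ≤ log R * R ^ 2 := by
  have hlog : 0 ≤ log x := log_nonneg hx
  rw [abs_of_nonneg hlog, sq, ← mul_assoc]
  have hexp : exp (s * log x) ≤ R :=
    calc exp (s * log x) ≤ exp (log x) := exp_le_exp.2 (by nlinarith)
      _ = x := exp_log (by linarith)
      _ ≤ R := hxR
  have hlogR : 0 ≤ log R := log_nonneg (hx.trans hxR)
  gcongr
  exact mul_nonneg hlogR (by linarith)

lemma abs_log_mul_exp_mul_le {s x R : ℝ} (hs : s ≤ 1 / 2) (hx₀ : 0 < x) (hxR : x ≤ R)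
    (hR : 1 ≤ R) : |log x| * exp (s * |log x|) * x ≤ 2 + log R * R ^ 2 := by
  have hK : 0 ≤ log R * R ^ 2 := mul_nonneg (log_nonneg hR) (sq_nonneg R)
  rcases le_total x 1 with hx₁ | hx₁
  · linarith [abs_log_mul_exp_mul_le_two hs hx₀ hx₁]
  · linarith [abs_log_mul_exp_mul_le_of_one_le (hs.trans (by norm_num)) hx₁ hxR]

lemma tendsto_abs_mul_const_nhds_zero (a : ℝ) :
    Tendsto (fun μ : ℝ ↦ |μ| * a) (𝓝 0) (𝓝 0) := by
  simpa using (continuous_abs.tendsto' (0 : ℝ) 0 abs_zero).mul_const a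

section L2Operator

open scoped Matrix.Norms.L2Operator

variable {m n : Type*} [Fintype m] [Fintype n] [DecidableEq n]

lemma euclNorm_mulVec_le (A : Matrix m n ℝ) (x : n → ℝ) :
    euclNorm (A *ᵥ x) ≤ ‖A‖ * euclNorm x := by
  rw [euclNorm_eq_norm_toLp, euclNorm_eq_norm_toLp]
  exact A.l2_opNorm_mulVec (WithLp.toLp 2 x)

lemma euclNorm_exp_smul_mulVec_sub_le (c : ℝ) (M : Matrix n n ℝ) (v : n → ℝ) :
    euclNorm (NormedSpace.exp (c • M) *ᵥ v - v) ≤ |c| * ‖M‖ * exp (|c| * ‖M‖) * euclNorm v := by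
  have hexp := NormedSpace.norm_exp_sub_one_le (c • M)
  rw [norm_smul, norm_eq_abs] at hexp
  calc euclNorm (NormedSpace.exp (c • M) *ᵥ v - v)
      = euclNorm ((NormedSpace.exp (c • M) - 1) *ᵥ v) := by rw [sub_mulVec, one_mulVec]
    _ ≤ |c| * ‖M‖ * exp (|c| * ‖M‖) * euclNorm v := by
      grw [euclNorm_mulVec_le, hexp]
      exact euclNorm_nonneg v

lemma euclNorm_exp_log_smul_mulVec_sub_le [DecidableEq m] (M : Matrix n n ℝ)
    (H : Matrix n m ℝ) {μ R : ℝ} (hμ : |μ| * ‖M‖ ≤ 1 / 2) (hR : 1 ≤ R) (w : m → ℝ)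
    (hw : 0 < euclNorm w) (hwR : euclNorm w ≤ R) :
    euclNorm (NormedSpace.exp ((μ * log (euclNorm w)) • M) *ᵥ (H *ᵥ w) - H *ᵥ w) ≤
      |μ| * (‖M‖ * ‖H‖ * (2 + log R * R ^ 2)) := by
  set x := euclNorm w
  calc _ ≤ |μ * log x| * ‖M‖ * exp (|μ * log x| * ‖M‖) * euclNorm (H *ᵥ w) :=
        euclNorm_exp_smul_mulVec_sub_le _ M _
    _ ≤ |μ * log x| * ‖M‖ * exp (|μ * log x| * ‖M‖) * (‖H‖ * x) := by
        gcongr; exact euclNorm_mulVec_le H w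
    _ = |μ| * (‖M‖ * ‖H‖ * (|log x| * exp (|μ| * ‖M‖ * |log x|) * x)) := by
        rw [abs_mul]; ring_nf
    _ ≤ |μ| * (‖M‖ * ‖H‖ * (2 + log R * R ^ 2)) := by
        gcongr; exact abs_log_mul_exp_mul_le hμ hw hwR hR

lemma eventually_forall_euclNorm_exp_log_smul_mulVec_sub_le [DecidableEq m] (M : Matrix n n ℝ)
    (H : Matrix n m ℝ) (R : ℝ) :
    ∃ C, ∀ᶠ μ in 𝓝 (0 : ℝ), ∀ w : m → ℝ, 0 < euclNorm w → euclNorm w ≤ R →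
      euclNorm (NormedSpace.exp ((μ * log (euclNorm w)) • M) *ᵥ (H *ᵥ w) - H *ᵥ w) ≤ |μ| * C := by
  refine ⟨‖M‖ * ‖H‖ * (2 + log (max R 1) * max R 1 ^ 2), ?_⟩
  filter_upwards [(tendsto_abs_mul_const_nhds_zero ‖M‖).eventually (ge_mem_nhds one_half_pos)]
    with μ hμ w hw hwR
  exact euclNorm_exp_log_smul_mulVec_sub_le M H hμ (le_max_right R 1) w hw
    (hwR.trans (le_max_left R 1))

end L2Operator

theorem injection_term_uniform_convergence_general
    (n p : ℕ) (M : Matrix (Fin n) (Fin n) ℝ) (H : Matrix (Fin n) (Fin p) ℝ)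
    (R : ℝ) :
    ∀ ε > (0 : ℝ), ∃ δ > (0 : ℝ), ∀ μ : ℝ, |μ| < δ →
      ∀ w : Fin p → ℝ, 0 < euclNorm w → euclNorm w ≤ R →
        euclNorm
          ((NormedSpace.exp ((μ * Real.log (euclNorm w)) • M)).mulVec (H.mulVec w)
            - H.mulVec w) < ε := by
  intro ε hε
  obtain ⟨C, hC⟩ := eventually_forall_euclNorm_exp_log_smul_mulVec_sub_le M H R
  have hsmall := (tendsto_abs_mul_const_nhds_zero C).eventually (gt_mem_nhds hε)
  obtain ⟨δ, hδ, hball⟩ := Metric.eventually_nhds_iff.1 (hC.and hsmall)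
  refine ⟨δ, hδ, fun μ hμ w hw hwR ↦ ?_⟩
  obtain ⟨hbound, hμC⟩ := hball (by rwa [Real.dist_0_eq_abs])
  exact (hbound w hw hwR).trans_lt hμC

theorem injection_term_uniform_convergence
    (n p : ℕ) (M : Matrix (Fin n) (Fin n) ℝ) (H : Matrix (Fin n) (Fin p) ℝ)
    (R : ℝ) (hR : 0 < R) :
    ∀ ε > (0 : ℝ), ∃ δ > (0 : ℝ), ∀ μ : ℝ, |μ| < δ →
      ∀ w : Fin p → ℝ, 0 < euclNorm w → euclNorm w ≤ R →
        euclNorm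
          ((NormedSpace.exp ((μ * Real.log (euclNorm w)) • M)).mulVec (H.mulVec w)
            - H.mulVec w) < ε :=
  injection_term_uniform_convergence_general n p M H R
end
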